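/- arXiv:1703.08257 — 2 statements merged into one kernel-verified Lean document; each statement's English description precedes it below -/
import Mathlib

section
/- Let G = (V,E) be a finite connected graph with at least 2 vertices, maximum degree Δ(G), and edge isoperimetric (Cheeger) constant ι(G) = min over nonempty S ⊆ V with |S| ≤ |V|/2 of |E(S,S^c)|/|S|, where E(S,S^c) is the set of edges with exactly one endpoint in S. Then the diameter of G satisfies diam(G) ≤ (4·Δ(G)/ι(G))·ln|V|. -/
/-! The ball `B(u, k)` around a vertex grows geometrically as long as it holds at most half of
the `n` vertices: at least `ι·|B(u,k)|` edges leave it, all of them end in the shell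
`B(u,k+1) \ B(u,k)`, and each shell vertex receives at most `Δ` of them, so
`|B(u,k+1)| ≥ (1 + ι/Δ)·|B(u,k)|`. Hence around every vertex some radius `r` with
`(1 + ι/Δ)^(r-1) ≤ n/2` gives a ball holding more than half of the vertices; two such balls meet,
so `diam ≤ 2r`. As `ι ≤ Δ` (take `S` a single vertex), `log (1 + ι/Δ) ≥ ι/(2Δ)`, and
`4·(Δ/ι)·log 2 ≥ 2` absorbs the two extra units of radius. -/

open Finset Real

lemma natCast_le_two_div_mul_log_of_one_add_pow_le {c x : ℝ} (hc : 0 < c) (hc2 : c ≤ 2) {m : ℕ}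
    (h : (1 + c) ^ m ≤ x) : (m : ℝ) ≤ 2 / c * log x := by
  have hlog : c / 2 ≤ log (1 + c) :=
    calc c / 2 ≤ 2 * c / (c + 2) := by
          rw [div_le_div_iff₀ two_pos (by linarith)]
          nlinarith
      _ ≤ log (1 + c) := le_log_one_add_of_nonneg hc.le
  have hpow : m * log (1 + c) ≤ log x := by
    rw [← log_pow]
    exact log_le_log (by positivity) h
  have := mul_le_mul_of_nonneg_left hlog m.cast_nonneg
  rw [div_mul_eq_mul_div, le_div_iff₀ hc]
  linarith

namespace SimpleGraph

lemma Connected.maxDegree_pos {V : Type*} [Fintype V] {G : SimpleGraph V} [DecidableRel G.Adj]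
    (hconn : G.Connected) (hcard : 1 < Fintype.card V) : 0 < G.maxDegree := by
  have : Nontrivial V := Fintype.one_lt_card_iff_nontrivial.1 hcard
  obtain ⟨v⟩ := this.to_nonempty
  obtain ⟨w, hw⟩ := hconn.preconnected.exists_adj_of_nontrivial v
  exact ((G.degree_pos_iff_exists_adj v).2 ⟨w, hw⟩).trans_le (G.degree_le_maxDegree v)

section Cut

variable {V : Type*} [Fintype V] [DecidableEq V] (G : SimpleGraph V) [DecidableRel G.Adj]

/-- The edges of `E(S, Sᶜ)`, each recorded as the ordered pair (endpoint in `S`, endpoint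
outside `S`). -/
def cutPairs (S : Finset V) : Finset (V × V) :=
  univ.filter fun p : V × V => p.1 ∈ S ∧ p.2 ∉ S ∧ G.Adj p.1 p.2

def cheegerRatios : Set ℝ :=
  {x | ∃ S : Finset V, S.Nonempty ∧ 2 * #S ≤ Fintype.card V ∧ x = (#(G.cutPairs S) : ℝ) / #S}

noncomputable def cheegerConstant : ℝ :=
  sInf G.cheegerRatios

@[simp]
lemma mem_cutPairs {S : Finset V} {p : V × V} :
    p ∈ G.cutPairs S ↔ p.1 ∈ S ∧ p.2 ∉ S ∧ G.Adj p.1 p.2 := by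
  simp [cutPairs]

lemma cutPairs_nonempty (hconn : G.Connected) {S : Finset V} {a b : V} (ha : a ∈ S)
    (hb : b ∉ S) : (G.cutPairs S).Nonempty := by
  obtain ⟨d, -, hd, hd'⟩ := (hconn a b).some.exists_boundary_dart S ha hb
  exact ⟨(d.fst, d.snd), G.mem_cutPairs.2 ⟨hd, hd', d.adj⟩⟩

lemma card_cutPairs_singleton (v : V) : #(G.cutPairs {v}) = G.degree v := by
  have : G.cutPairs {v} = {v} ×ˢ G.neighborFinset v := by
    ext ⟨a, b⟩
    simp only [mem_cutPairs, mem_singleton, mem_product, mem_neighborFinset]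
    constructor
    · rintro ⟨rfl, -, h⟩
      exact ⟨rfl, h⟩
    · rintro ⟨rfl, h⟩
      exact ⟨rfl, h.ne', h⟩
  rw [this, card_product, card_singleton, one_mul, card_neighborFinset_eq_degree]

lemma card_cutPairs_le_maxDegree_mul {S T : Finset V}
    (hT : ∀ a ∈ S, ∀ b ∉ S, G.Adj a b → b ∈ T) : #(G.cutPairs S) ≤ G.maxDegree * #T := by
  refine card_le_mul_card_image_of_maps_to (f := Prod.snd) ?_ _ fun b _ => ?_
  · rintro ⟨a, b⟩ h
    rw [mem_cutPairs] at h
    exact hT a h.1 b h.2.1 h.2.2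
  calc #{p ∈ G.cutPairs S | p.2 = b} ≤ #(G.neighborFinset b ×ˢ {b}) := by
        refine card_le_card fun p hp => ?_
        simp only [mem_filter, mem_cutPairs] at hp
        simp [← hp.2, hp.1.2.2.symm]
    _ = G.degree b := by simp
    _ ≤ G.maxDegree := G.degree_le_maxDegree b

lemma cheegerRatios_bddBelow : BddBelow G.cheegerRatios :=
  ⟨0, by rintro _ ⟨S, -, -, rfl⟩; positivity⟩

lemma degree_mem_cheegerRatios (hcard : 1 < Fintype.card V) (v : V) :
    (G.degree v : ℝ) ∈ G.cheegerRatios :=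
  ⟨{v}, singleton_nonempty v, by rw [card_singleton]; omega, by simp [card_cutPairs_singleton]⟩

lemma cheegerConstant_le_maxDegree (hcard : 1 < Fintype.card V) :
    G.cheegerConstant ≤ G.maxDegree := by
  obtain ⟨v⟩ : Nonempty V := Fintype.card_pos_iff.1 (by omega)
  calc G.cheegerConstant ≤ G.degree v :=
        csInf_le G.cheegerRatios_bddBelow (G.degree_mem_cheegerRatios hcard v)
    _ ≤ G.maxDegree := by exact_mod_cast G.degree_le_maxDegree v

lemma cheegerConstant_pos (hconn : G.Connected) (hcard : 1 < Fintype.card V) :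
    0 < G.cheegerConstant := by
  obtain ⟨v⟩ : Nonempty V := Fintype.card_pos_iff.1 (by omega)
  have hn : (0 : ℝ) < Fintype.card V := by positivity
  refine (one_div_pos.2 hn).trans_le
    (le_csInf ⟨_, G.degree_mem_cheegerRatios hcard v⟩ ?_)
  rintro _ ⟨S, ⟨a, ha⟩, hS, rfl⟩
  obtain ⟨b, -, hb⟩ :=
    exists_mem_notMem_of_card_lt_card (s := S) (t := univ) (by rw [card_univ]; omega)
  have hcut := (G.cutPairs_nonempty hconn ha hb).card_pos
  exact div_le_div₀ (by positivity) (by exact_mod_cast hcut)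
    (by exact_mod_cast card_pos.2 ⟨a, ha⟩) (by exact_mod_cast card_le_univ S)

lemma cheegerConstant_mul_card_le {S : Finset V} (hS : S.Nonempty)
    (hS2 : 2 * #S ≤ Fintype.card V) : G.cheegerConstant * #S ≤ #(G.cutPairs S) := by
  rw [← le_div_iff₀ (by exact_mod_cast hS.card_pos)]
  exact csInf_le G.cheegerRatios_bddBelow ⟨S, hS, hS2, rfl⟩

end Cut

section Ball

variable {V : Type*} [Fintype V] (G : SimpleGraph V)

noncomputable def distBall (u : V) (k : ℕ) : Finset V :=
  univ.filter fun w => G.dist u w ≤ k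

@[simp]
lemma mem_distBall {u w : V} {k : ℕ} : w ∈ G.distBall u k ↔ G.dist u w ≤ k := by
  simp [distBall]

lemma distBall_zero (hconn : G.Connected) (u : V) : G.distBall u 0 = {u} := by
  ext w
  rw [mem_distBall, mem_singleton, Nat.le_zero, hconn.dist_eq_zero_iff, eq_comm]

lemma distBall_mono (u : V) {j k : ℕ} (hjk : j ≤ k) : G.distBall u j ⊆ G.distBall u k :=
  fun _ hw => (G.mem_distBall.1 hw).trans hjk |> G.mem_distBall.2

lemma distBall_diam_eq_univ (hconn : G.Connected) (u : V) : G.distBall u G.diam = univ := by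
  have : Nonempty V := ⟨u⟩
  exact eq_univ_of_forall fun _ =>
    G.mem_distBall.2 (G.dist_le_diam (G.connected_iff_ediam_ne_top.1 hconn))

lemma dist_le_add_of_card_lt (hconn : G.Connected) {u v : V} {r s : ℕ}
    (hr : Fintype.card V < 2 * #(G.distBall u r)) (hs : Fintype.card V < 2 * #(G.distBall v s)) :
    G.dist u v ≤ r + s := by
  classical
  obtain ⟨w, hw⟩ : (G.distBall u r ∩ G.distBall v s).Nonempty := by
    rw [← card_pos]
    have := card_union_add_card_inter (G.distBall u r) (G.distBall v s)
    have := card_le_univ (G.distBall u r ∪ G.distBall v s)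
    omega
  rw [mem_inter, mem_distBall, mem_distBall] at hw
  calc G.dist u v ≤ G.dist u w + G.dist w v := hconn.dist_triangle
    _ ≤ r + s := by rw [dist_comm (u := w)]; omega

variable [DecidableEq V] [DecidableRel G.Adj]

lemma card_cutPairs_distBall_le (u : V) (k : ℕ) :
    #(G.cutPairs (G.distBall u k)) ≤ G.maxDegree * #(G.distBall u (k + 1) \ G.distBall u k) := by
  refine G.card_cutPairs_le_maxDegree_mul fun a ha b hb hab => mem_sdiff.2 ⟨?_, hb⟩
  rw [mem_distBall] at ha ⊢
  have := hab.reachable.dist_triangle_right u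
  rw [dist_eq_one_iff_adj.2 hab] at this
  omega

variable (hconn : G.Connected) (hcard : 1 < Fintype.card V) (u : V)
include hconn hcard

lemma one_add_mul_card_distBall_le {k : ℕ} (h : 2 * #(G.distBall u k) ≤ Fintype.card V) :
    (1 + G.cheegerConstant / G.maxDegree) * #(G.distBall u k) ≤ #(G.distBall u (k + 1)) := by
  have hΔ : (0 : ℝ) < G.maxDegree := by exact_mod_cast hconn.maxDegree_pos hcard
  have hsub := G.distBall_mono u k.le_succ
  have hshell : (#(G.distBall u (k + 1) \ G.distBall u k) : ℝ)
      = #(G.distBall u (k + 1)) - #(G.distBall u k) := by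
    rw [card_sdiff_of_subset hsub, Nat.cast_sub (card_le_card hsub)]
  have key : G.cheegerConstant * #(G.distBall u k)
      ≤ G.maxDegree * (#(G.distBall u (k + 1)) - #(G.distBall u k)) :=
    calc G.cheegerConstant * #(G.distBall u k) ≤ #(G.cutPairs (G.distBall u k)) :=
          G.cheegerConstant_mul_card_le ⟨u, by simp⟩ h
      _ ≤ G.maxDegree * #(G.distBall u (k + 1) \ G.distBall u k) := by
          exact_mod_cast G.card_cutPairs_distBall_le u k
      _ = _ := by rw [hshell]
  have : G.cheegerConstant / G.maxDegree * #(G.distBall u k)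
      ≤ #(G.distBall u (k + 1)) - #(G.distBall u k) := by
    rwa [div_mul_eq_mul_div, div_le_iff₀' hΔ]
  linarith

lemma one_add_pow_le_card_distBall {k : ℕ}
    (h : ∀ j < k, 2 * #(G.distBall u j) ≤ Fintype.card V) :
    (1 + G.cheegerConstant / G.maxDegree) ^ k ≤ #(G.distBall u k) := by
  induction k with
  | zero => simp [G.distBall_zero hconn]
  | succ k ih =>
    have hΔ : (0 : ℝ) < G.maxDegree := by exact_mod_cast hconn.maxDegree_pos hcard
    have hc : 0 ≤ 1 + G.cheegerConstant / G.maxDegree := by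
      have := G.cheegerConstant_pos hconn hcard
      positivity
    calc (1 + G.cheegerConstant / G.maxDegree) ^ (k + 1)
        = (1 + G.cheegerConstant / G.maxDegree) * (1 + G.cheegerConstant / G.maxDegree) ^ k :=
          pow_succ' _ _
      _ ≤ (1 + G.cheegerConstant / G.maxDegree) * #(G.distBall u k) :=
          mul_le_mul_of_nonneg_left (ih fun j hj => h j (by omega)) hc
      _ ≤ #(G.distBall u (k + 1)) :=
          G.one_add_mul_card_distBall_le hconn hcard u (h k k.lt_succ_self)

lemma exists_radius_card_distBall_gt_half :
    ∃ m : ℕ, Fintype.card V < 2 * #(G.distBall u (m + 1)) ∧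
      (1 + G.cheegerConstant / G.maxDegree) ^ m ≤ (Fintype.card V : ℝ) / 2 := by
  have hex : ∃ k, Fintype.card V < 2 * #(G.distBall u k) :=
    ⟨G.diam, by rw [G.distBall_diam_eq_univ hconn u, card_univ]; omega⟩
  have h0 : Nat.find hex ≠ 0 := by
    intro h
    have := Nat.find_spec hex
    rw [h, G.distBall_zero hconn, card_singleton] at this
    omega
  obtain ⟨m, hm⟩ := Nat.exists_eq_add_one_of_ne_zero h0
  have hsmall : ∀ j < m + 1, 2 * #(G.distBall u j) ≤ Fintype.card V :=
    fun j hj => not_lt.1 (Nat.find_min hex (hm ▸ hj))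
  refine ⟨m, hm ▸ Nat.find_spec hex, ?_⟩
  calc (1 + G.cheegerConstant / G.maxDegree) ^ m ≤ #(G.distBall u m) :=
        G.one_add_pow_le_card_distBall hconn hcard u fun j hj => hsmall j (by omega)
    _ ≤ (Fintype.card V : ℝ) / 2 := by
        rw [le_div_iff₀' two_pos]
        exact_mod_cast hsmall m m.lt_succ_self

end Ball

end SimpleGraph

/-- For a finite connected simple graph `G` on at least two vertices, with maximum
degree `Δ(G)` and edge isoperimetric (Cheeger) constant
`ι(G) = min {|E(S,Sᶜ)|/|S| : ∅ ≠ S, |S| ≤ |V|/2}`, the diameter satisfies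
`diam(G) ≤ (4·Δ(G)/ι(G))·ln |V|`. -/
theorem diam_le_of_cheeger {V : Type*} [Fintype V] [DecidableEq V]
    (G : SimpleGraph V) [DecidableRel G.Adj]
    (hconn : G.Connected) (hcard : 1 < Fintype.card V) (ι : ℝ)
    (hι : ι = sInf {x : ℝ | ∃ S : Finset V, S.Nonempty ∧ 2 * S.card ≤ Fintype.card V ∧
      x = ((Finset.univ.filter
            (fun p : V × V => p.1 ∈ S ∧ p.2 ∉ S ∧ G.Adj p.1 p.2)).card : ℝ) / S.card}) :
    (G.diam : ℝ) ≤ 4 * G.maxDegree / ι * Real.log (Fintype.card V) := by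
  obtain rfl : ι = G.cheegerConstant := hι
  have hΔ : (0 : ℝ) < G.maxDegree := by exact_mod_cast hconn.maxDegree_pos hcard
  set c := G.cheegerConstant / G.maxDegree with hc_def
  have hc : 0 < c := div_pos (G.cheegerConstant_pos hconn hcard) hΔ
  have hc1 : c ≤ 1 := (div_le_one hΔ).2 (G.cheegerConstant_le_maxDegree hcard)
  have : Nonempty V := Fintype.card_pos_iff.1 (by omega)
  obtain ⟨u, v, huv⟩ := G.exists_dist_eq_diam
  obtain ⟨m, hm, hmc⟩ := G.exists_radius_card_distBall_gt_half hconn hcard u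
  obtain ⟨m', hm', hmc'⟩ := G.exists_radius_card_distBall_gt_half hconn hcard v
  have hdiam : (G.diam : ℝ) ≤ (m + 1) + (m' + 1) := by
    exact_mod_cast huv ▸ G.dist_le_add_of_card_lt hconn hm hm'
  have hlog := natCast_le_two_div_mul_log_of_one_add_pow_le hc (by linarith) hmc
  have hlog' := natCast_le_two_div_mul_log_of_one_add_pow_le hc (by linarith) hmc'
  rw [log_div (by positivity) two_ne_zero] at hlog hlog'
  have h2 : 2 ≤ 4 / c * log 2 :=
    calc 2 ≤ 4 * log 2 := by linarith [log_two_gt_d9]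
      _ ≤ 4 / c * log 2 := by
          gcongr
          rw [le_div_iff₀ hc]
          linarith
  rw [show 4 * (G.maxDegree : ℝ) / G.cheegerConstant = 4 / c by rw [hc_def]; field_simp]
  have hsplit : 4 / c * log (Fintype.card V)
      = 2 * (2 / c * (log (Fintype.card V) - log 2)) + 4 / c * log 2 := by ring
  linarith
end

section
/- Let P be a reversible irreducible Markov chain on a finite state space with stationary distribution π, second largest eigenvalue λ₁, and conductance h = min over S with π(S) ≤ 1/2 of Q(S,S^c)/π(S) where Q(u,v)=π(u)P(u,v). Then h²/2 ≤ 1 − λ₁ ≤ 2h. -/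
/-!
Conjugating `P` by `diag √π` gives a symmetric matrix with the same eigenvectors up to that
scaling, and by irreducibility its eigenvalue `1` only carries the vector `√π`. Hence on
functions of `π`-mean zero the Dirichlet form is at least `(1 - λ₁)` times the squared norm;
testing this on `1_S - π(S)` gives `1 - λ₁ ≤ 2h`.

Conversely, choose an eigenfunction of `λ₁` whose positive part `g` lives on a set of measure
at most `1/2`. Since `P g ≥ λ₁ g` there, the Dirichlet form of `g` is at most `(1 - λ₁)‖g‖²`.
Summing the conductance bound over the level sets of `g²` gives
`∑ Q(u,v) |g(u)² - g(v)²| ≥ 2h‖g‖²`, and Cauchy–Schwarz bounds the left side by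
`√(8 (1 - λ₁)) ‖g‖²`, whence `h² ≤ 2(1 - λ₁)`.
-/

open Matrix Finset

theorem Matrix.mem_spectrum_iff_exists_mulVec_eq_smul {K n : Type*} [Field K] [Fintype n]
    [DecidableEq n] {A : Matrix n n K} {μ : K} :
    μ ∈ spectrum K A ↔ ∃ v ≠ 0, A *ᵥ v = μ • v := by
  rw [← Matrix.spectrum_toLin', ← Module.End.hasEigenvalue_iff_mem_spectrum]
  constructor
  · intro h
    obtain ⟨v, hv, hv0⟩ := h.exists_hasEigenvector
    exact ⟨v, hv0, by simpa using Module.End.mem_eigenspace_iff.1 hv⟩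
  · rintro ⟨v, hv0, hv⟩
    exact Module.End.hasEigenvalue_of_hasEigenvector
      ⟨Module.End.mem_eigenspace_iff.2 (by simpa using hv), hv0⟩

theorem Matrix.IsHermitian.dotProduct_mulVec_le {n : Type*} [Fintype n] [DecidableEq n]
    {A : Matrix n n ℝ} (hA : A.IsHermitian) {c : ℝ} {x : n → ℝ}
    (hx : ∀ (μ : ℝ) (v : n → ℝ), A *ᵥ v = μ • v → c < μ → v ⬝ᵥ x = 0) :
    x ⬝ᵥ (A *ᵥ x) ≤ c * (x ⬝ᵥ x) := by
  set b := hA.eigenvectorBasis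
  have hinner : ∀ y : n → ℝ, ∀ j, inner ℝ (b j) (WithLp.toLp 2 y) = y ⬝ᵥ ⇑(b j) := fun y j => by
    simp [EuclideanSpace.inner_eq_star_dotProduct]
  have hcoeff : ∀ j, (A *ᵥ x) ⬝ᵥ ⇑(b j) = hA.eigenvalues j * (x ⬝ᵥ ⇑(b j)) := fun j => by
    rw [dotProduct_comm, dotProduct_mulVec, ← mulVec_transpose,
      ← conjTranspose_eq_transpose_of_trivial, hA.eq, hA.mulVec_eigenvectorBasis, smul_dotProduct,
      smul_eq_mul, dotProduct_comm]
  have hexp : ∀ y : n → ℝ, x ⬝ᵥ y = ∑ j, (x ⬝ᵥ ⇑(b j)) * (y ⬝ᵥ ⇑(b j)) := fun y => by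
    have hparseval := b.sum_inner_mul_inner (WithLp.toLp 2 x) (WithLp.toLp 2 y)
    simp only [hinner, real_inner_comm _ (WithLp.toLp 2 x)] at hparseval
    rw [hparseval, EuclideanSpace.inner_toLp_toLp, star_trivial]
  rw [hexp, hexp, mul_sum]
  refine sum_le_sum fun j _ => ?_
  rw [hcoeff]
  by_cases hj : c < hA.eigenvalues j
  · rw [dotProduct_comm, hx _ _ (hA.mulVec_eigenvectorBasis j) hj]; simp
  · nlinarith [sq_nonneg (x ⬝ᵥ ⇑(b j)), not_lt.1 hj]

theorem Matrix.exists_forall_eq_of_mulVec_eq_self {V : Type*} [Fintype V] [DecidableEq V]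
    [Nonempty V] {P : Matrix V V ℝ} (hP : P ∈ rowStochastic ℝ V)
    (hirr : ∀ u v, ∃ t : ℕ, 0 < (P ^ t) u v) {f : V → ℝ} (hf : P *ᵥ f = f) :
    ∃ c, ∀ u, f u = c := by
  obtain ⟨u₀, -, hmax⟩ := exists_max_image univ f univ_nonempty
  refine ⟨f u₀, fun v => ?_⟩
  obtain ⟨t, ht⟩ := hirr u₀ v
  have hPt := pow_mem hP t
  have hfix : ∀ k : ℕ, (P ^ k) *ᵥ f = f := fun k => by
    induction k with
    | zero => simp
    | succ k ih => rw [pow_succ, ← mulVec_mulVec, hf, ih]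
  have hsum : ∑ w, (P ^ t) u₀ w * (f u₀ - f w) = 0 := by
    have hmean := congrFun (hfix t) u₀
    simp only [mulVec, dotProduct] at hmean
    simp only [mul_sub, sum_sub_distrib, ← sum_mul, sum_row_of_mem_rowStochastic hPt, one_mul]
    linarith
  have hterm := (sum_eq_zero_iff_of_nonneg fun w _ => mul_nonneg
    (nonneg_of_mem_rowStochastic hPt) (sub_nonneg.2 (hmax w (mem_univ w)))).1 hsum v (mem_univ v)
  linarith [(mul_eq_zero.1 hterm).resolve_left ht.ne']

theorem exists_pos_of_sum_mul_eq_zero {ι : Type*} [Fintype ι] {w : ι → ℝ}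
    (hw : ∀ i, 0 < w i) {f : ι → ℝ} (hf0 : f ≠ 0)
    (hf : ∑ i, w i * f i = 0) : ∃ i, 0 < f i := by
  by_contra! hneg
  refine hf0 (funext fun i => ?_)
  have hterm := (sum_eq_zero_iff_of_nonpos fun j _ =>
    mul_nonpos_of_nonneg_of_nonpos (hw j).le (hneg j)).1 hf i (mem_univ i)
  exact (mul_eq_zero.1 hterm).resolve_left (hw i).ne'

theorem posPart_sub_eq_ite {a m : ℝ} (hm : 0 ≤ m) (hma : 0 < a → m ≤ a) :
    (a - m)⁺ = if 0 < a then a - m else 0 := by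
  split_ifs with h
  · exact posPart_eq_self.2 (sub_nonneg.2 (hma h))
  · exact posPart_eq_zero.2 (by linarith)

theorem eq_posPart_sub_add_mul_ite {a m : ℝ} (hm : 0 ≤ m) (ha : 0 ≤ a) (hma : 0 < a → m ≤ a) :
    a = (a - m)⁺ + m * if 0 < a then 1 else 0 := by
  rw [posPart_sub_eq_ite hm hma]
  split_ifs with h
  · ring
  · simp [le_antisymm (not_lt.1 h) ha]

theorem abs_sub_eq_abs_posPart_sub_add {a b m : ℝ} (hm : 0 ≤ m) (ha : 0 ≤ a) (hb : 0 ≤ b)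
    (hma : 0 < a → m ≤ a) (hmb : 0 < b → m ≤ b) :
    |a - b| = |(a - m)⁺ - (b - m)⁺| +
      m * |(if 0 < a then 1 else 0) - (if 0 < b then 1 else 0)| := by
  rw [posPart_sub_eq_ite hm hma, posPart_sub_eq_ite hm hmb]
  rcases ha.eq_or_lt with rfl | ha <;> rcases hb.eq_or_lt with rfl | hb
  · simp
  · simp [hb, hb.le, abs_of_nonpos (sub_nonpos.2 (hmb hb))]
  · simp [ha, ha.le, abs_of_nonneg (sub_nonneg.2 (hma ha))]
  · simp [ha, hb]

namespace MarkovChain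

variable {V : Type*} {P : Matrix V V ℝ} {π : V → ℝ}

def IsReversible (π : V → ℝ) (P : Matrix V V ℝ) : Prop :=
  ∀ u v, π u * P u v = π v * P v u

noncomputable def symmetrization (π : V → ℝ) (P : Matrix V V ℝ) : Matrix V V ℝ :=
  of fun u v => √(π u) * P u v / √(π v)

theorem IsReversible.isHermitian_symmetrization (hrev : IsReversible π P) (hπ0 : ∀ u, 0 < π u) :
    (symmetrization π P).IsHermitian := by
  ext u v
  have hs : ∀ w, √(π w) * √(π w) = π w := fun w => Real.mul_self_sqrt (hπ0 w).le
  simp only [conjTranspose_apply, star_trivial, symmetrization, of_apply]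
  rw [div_eq_div_iff (Real.sqrt_pos.2 (hπ0 u)).ne' (Real.sqrt_pos.2 (hπ0 v)).ne']
  rw [mul_right_comm, hs, mul_right_comm, hs, hrev]

variable [Fintype V]

noncomputable def dirichletForm (π : V → ℝ) (P : Matrix V V ℝ) (f : V → ℝ) : ℝ :=
  (∑ u, ∑ v, π u * P u v * (f u - f v) ^ 2) / 2

noncomputable def posSupport (f : V → ℝ) : Finset V := univ.filter fun u => 0 < f u

@[simp]
theorem mem_posSupport {f : V → ℝ} {u : V} : u ∈ posSupport f ↔ 0 < f u := by
  simp [posSupport]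

theorem sum_sum_mul_sq_left (hP1 : ∀ u, ∑ v, P u v = 1) (f : V → ℝ) :
    ∑ u, ∑ v, π u * P u v * f u ^ 2 = ∑ u, π u * f u ^ 2 :=
  sum_congr rfl fun u _ => by rw [← sum_mul, ← mul_sum, hP1, mul_one]

theorem dirichletForm_nonneg (hπ0 : ∀ u, 0 ≤ π u) (hP0 : ∀ u v, 0 ≤ P u v) (f : V → ℝ) :
    0 ≤ dirichletForm π P f :=
  div_nonneg (sum_nonneg fun u _ => sum_nonneg fun v _ =>
    mul_nonneg (mul_nonneg (hπ0 u) (hP0 u v)) (sq_nonneg _)) zero_le_two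

theorem symmetrization_mulVec (hπ0 : ∀ u, 0 < π u) (f : V → ℝ) :
    symmetrization π P *ᵥ (fun u => √(π u) * f u) = fun u => √(π u) * (P *ᵥ f) u := by
  ext u
  simp only [mulVec, dotProduct, symmetrization, of_apply, mul_sum]
  refine sum_congr rfl fun v _ => ?_
  have hv := (Real.sqrt_pos.2 (hπ0 v)).ne'
  field_simp

namespace IsReversible

theorem sum_mul_apply (hrev : IsReversible π P) (hP1 : ∀ u, ∑ v, P u v = 1) (v : V) :
    ∑ u, π u * P u v = π v := by
  simp_rw [hrev _ v, ← mul_sum, hP1, mul_one]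

theorem sum_mul_eq_zero_of_mulVec_eq_smul (hrev : IsReversible π P)
    (hP1 : ∀ u, ∑ v, P u v = 1) {μ : ℝ} (hμ : μ ≠ 1) {f : V → ℝ} (hf : P *ᵥ f = μ • f) :
    ∑ u, π u * f u = 0 := by
  have hstat : ∑ u, π u * (P *ᵥ f) u = ∑ u, π u * f u := by
    simp_rw [mulVec, dotProduct, mul_sum, ← mul_assoc]
    rw [sum_comm]
    simp_rw [← sum_mul, hrev.sum_mul_apply hP1]
  rw [hf] at hstat
  simp only [Pi.smul_apply, smul_eq_mul, mul_left_comm _ μ, ← mul_sum] at hstat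
  exact (mul_left_eq_self₀.1 hstat).resolve_left hμ

theorem sum_sum_mul_sq_right (hrev : IsReversible π P) (hP1 : ∀ u, ∑ v, P u v = 1)
    (f : V → ℝ) : ∑ u, ∑ v, π u * P u v * f v ^ 2 = ∑ u, π u * f u ^ 2 := by
  rw [sum_comm]
  simp_rw [← sum_mul, hrev.sum_mul_apply hP1]

theorem dirichletForm_eq (hrev : IsReversible π P) (hP1 : ∀ u, ∑ v, P u v = 1) (f : V → ℝ) :
    dirichletForm π P f = ∑ u, π u * f u ^ 2 - ∑ u, π u * f u * (P *ᵥ f) u := by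
  have hcross : ∑ u, ∑ v, π u * P u v * (f u * f v) = ∑ u, π u * f u * (P *ᵥ f) u := by
    simp_rw [mulVec, dotProduct, mul_sum]
    exact sum_congr rfl fun u _ => sum_congr rfl fun v _ => by ring
  have hexp : ∀ u v, π u * P u v * (f u - f v) ^ 2 =
      π u * P u v * f u ^ 2 + π u * P u v * f v ^ 2 - 2 * (π u * P u v * (f u * f v)) :=
    fun u v => by ring
  simp only [dirichletForm, hexp, sum_sub_distrib, sum_add_distrib, ← mul_sum,
    sum_sum_mul_sq_left hP1, hrev.sum_sum_mul_sq_right hP1, hcross]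
  ring

end IsReversible

variable [DecidableEq V]

/-- The flow `Q(S, Sᶜ)` of the statement. -/
def ergodicFlow (π : V → ℝ) (P : Matrix V V ℝ) (S : Finset V) : ℝ :=
  ∑ u ∈ S, ∑ v ∈ Sᶜ, π u * P u v

theorem ergodicFlow_nonneg (hπ0 : ∀ u, 0 ≤ π u) (hP0 : ∀ u v, 0 ≤ P u v)
    (S : Finset V) : 0 ≤ ergodicFlow π P S :=
  sum_nonneg fun u _ => sum_nonneg fun v _ => mul_nonneg (hπ0 u) (hP0 u v)

namespace IsReversible

theorem sum_sum_mul_abs_indicator_sub (hrev : IsReversible π P) (S : Finset V) :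
    ∑ u, ∑ v, π u * P u v * |(if u ∈ S then 1 else 0) - (if v ∈ S then 1 else 0)| =
      2 * ergodicFlow π P S := by
  have hcut : ∀ u v, π u * P u v * |(if u ∈ S then (1:ℝ) else 0) - (if v ∈ S then 1 else 0)| =
      (if u ∈ S then if v ∈ Sᶜ then π u * P u v else 0 else 0) +
        (if v ∈ S then if u ∈ Sᶜ then π v * P v u else 0 else 0) := by
    intro u v
    by_cases hu : u ∈ S <;> by_cases hv : v ∈ S <;> simp [hu, hv, hrev u v]
  rw [two_mul, ergodicFlow]
  simp only [hcut, sum_add_distrib, sum_ite_irrel, sum_const_zero, sum_ite_mem_eq]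
  rw [sum_comm (s := S)]

theorem sum_mul_mulVec_le [Nonempty V] (hrev : IsReversible π P) (hP : P ∈ rowStochastic ℝ V)
    (hπ0 : ∀ u, 0 < π u) (hirr : ∀ u v, ∃ t : ℕ, 0 < (P ^ t) u v) {lam1 : ℝ}
    (htop : ∀ μ ∈ spectrum ℝ P, μ ≠ 1 → μ ≤ lam1) {g : V → ℝ} (hg : ∑ u, π u * g u = 0) :
    ∑ u, π u * g u * (P *ᵥ g) u ≤ lam1 * ∑ u, π u * g u ^ 2 := by
  have hs : ∀ u, √(π u) ≠ 0 := fun u => (Real.sqrt_pos.2 (hπ0 u)).ne'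
  have hss : ∀ u, √(π u) * √(π u) = π u := fun u => Real.mul_self_sqrt (hπ0 u).le
  -- An eigenvector of the symmetrization with eigenvalue above `lam1` is `√π` times a harmonic,
  -- hence constant, function, so it is orthogonal to `√π g`.
  have key := (hrev.isHermitian_symmetrization hπ0).dotProduct_mulVec_le (c := lam1)
    (x := fun u => √(π u) * g u) ?_
  · rw [symmetrization_mulVec hπ0] at key
    convert key using 1
    · simp only [dotProduct]
      exact sum_congr rfl fun u _ => by linear_combination -(g u * (P *ᵥ g) u) * hss u
    · simp only [dotProduct]
      congr 1
      exact sum_congr rfl fun u _ => by linear_combination -(g u ^ 2) * hss u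
  intro μ v hv hμ
  set w : V → ℝ := fun u => v u / √(π u)
  have hvw : v = fun u => √(π u) * w u := funext fun u => (mul_div_cancel₀ _ (hs u)).symm
  rw [hvw, symmetrization_mulVec hπ0] at hv
  have hw : P *ᵥ w = μ • w := funext fun u => by
    have hvu := congrFun hv u
    simp only [Pi.smul_apply, smul_eq_mul] at hvu ⊢
    exact mul_left_cancel₀ (hs u) (by rw [hvu]; ring)
  by_cases hw0 : w = 0
  · simp [hvw, hw0]
  have hμ1 : μ = 1 := by
    by_contra hne
    exact hμ.not_ge (htop μ (mem_spectrum_iff_exists_mulVec_eq_smul.2 ⟨w, hw0, hw⟩) hne)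
  obtain ⟨c, hc⟩ := exists_forall_eq_of_mulVec_eq_self hP hirr (f := w)
    (by rw [hw, hμ1, one_smul])
  calc v ⬝ᵥ (fun u => √(π u) * g u) = c * ∑ u, π u * g u := by
        rw [hvw, dotProduct, mul_sum]
        exact sum_congr rfl fun u _ => by rw [hc]; linear_combination c * g u * hss u
    _ = 0 := by rw [hg, mul_zero]

theorem mul_sum_sq_le_dirichletForm [Nonempty V] (hrev : IsReversible π P)
    (hP : P ∈ rowStochastic ℝ V) (hπ0 : ∀ u, 0 < π u) (hirr : ∀ u v, ∃ t : ℕ, 0 < (P ^ t) u v)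
    {lam1 : ℝ} (htop : ∀ μ ∈ spectrum ℝ P, μ ≠ 1 → μ ≤ lam1) {g : V → ℝ}
    (hg : ∑ u, π u * g u = 0) :
    (1 - lam1) * ∑ u, π u * g u ^ 2 ≤ dirichletForm π P g := by
  rw [hrev.dirichletForm_eq (sum_row_of_mem_rowStochastic hP)]
  linarith [hrev.sum_mul_mulVec_le hP hπ0 hirr htop hg]

theorem one_sub_div_two_le_ergodicFlow_div [Nonempty V] (hrev : IsReversible π P)
    (hP : P ∈ rowStochastic ℝ V) (hπ0 : ∀ u, 0 < π u) (hπ1 : ∑ u, π u = 1)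
    (hirr : ∀ u v, ∃ t : ℕ, 0 < (P ^ t) u v) {lam1 : ℝ}
    (htop : ∀ μ ∈ spectrum ℝ P, μ ≠ 1 → μ ≤ lam1) (hgap : lam1 ≤ 1) {S : Finset V}
    (hS : S.Nonempty) (hS2 : ∑ u ∈ S, π u ≤ 1 / 2) :
    (1 - lam1) / 2 ≤ ergodicFlow π P S / ∑ u ∈ S, π u := by
  set c := ∑ u ∈ S, π u
  have hc : 0 < c := sum_pos (fun u _ => hπ0 u) hS
  set ind : V → ℝ := fun u => if u ∈ S then 1 else 0
  have hind : ∑ u, π u * ind u = c := by simp [ind, c]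
  set t : V → ℝ := fun u => ind u - c
  have ht : ∑ u, π u * t u = 0 := by
    simp [t, mul_sub, sum_sub_distrib, hind, ← sum_mul, hπ1]
  have hvar : ∑ u, π u * t u ^ 2 = c - c ^ 2 := by
    have hsq : ∀ u, π u * t u ^ 2 = (1 - 2 * c) * (π u * ind u) + c ^ 2 * π u := fun u => by
      by_cases hu : u ∈ S <;> simp [t, ind, hu] <;> ring
    simp only [hsq, sum_add_distrib, ← mul_sum, hind, hπ1]
    ring
  have hE : dirichletForm π P t = ergodicFlow π P S := by
    have hsq : ∀ u v, (t u - t v) ^ 2 = |ind u - ind v| := fun u v => by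
      rw [show t u - t v = ind u - ind v by simp [t]]
      by_cases hu : u ∈ S <;> by_cases hv : v ∈ S <;> simp [ind, hu, hv]
    rw [dirichletForm]
    simp only [hsq, ind, hrev.sum_sum_mul_abs_indicator_sub]
    ring
  have hpoinc := hrev.mul_sum_sq_le_dirichletForm hP hπ0 hirr htop ht
  rw [hvar, hE] at hpoinc
  rw [le_div_iff₀ hc]
  nlinarith [mul_nonneg (mul_nonneg (sub_nonneg.2 hgap) hc.le) (sub_nonneg.2 hS2)]

theorem two_mul_sum_le_sum_abs_sub (hrev : IsReversible π P) {h : ℝ}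
    {φ : V → ℝ} (hφ0 : 0 ≤ φ)
    (hcut : ∀ S ⊆ posSupport φ, S.Nonempty → h * ∑ u ∈ S, π u ≤ ergodicFlow π P S) :
    2 * h * ∑ u, π u * φ u ≤ ∑ u, ∑ v, π u * P u v * |φ u - φ v| := by
  -- Peel off the lowest positive level `m`: `φ = (φ - m)⁺ + m • 1_{φ > 0}`, and both sides of the
  -- inequality split accordingly.
  induction hn : (posSupport φ).card using Nat.strong_induction_on generalizing φ with
  | _ n ih =>
  rcases (posSupport φ).eq_empty_or_nonempty with hS | hS
  · have hφ : φ = 0 := funext fun u =>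
      le_antisymm (not_lt.1 fun hu => by simpa [hS] using mem_posSupport.2 hu) (hφ0 u)
    simp [hφ]
  obtain ⟨u₁, hu₁, hmin⟩ := exists_min_image _ φ hS
  set m := φ u₁
  have hm : 0 < m := mem_posSupport.1 hu₁
  have hmle : ∀ u, 0 < φ u → m ≤ φ u := fun u hu => hmin u (mem_posSupport.2 hu)
  set ψ : V → ℝ := fun u => (φ u - m)⁺
  have hψ : posSupport ψ ⊂ posSupport φ := by
    refine ssubset_iff_of_subset (fun u hu => ?_) |>.2 ⟨u₁, hu₁, by simp [ψ, m]⟩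
    simp only [mem_posSupport, ψ, posPart_pos_iff, sub_pos] at hu ⊢
    exact hm.trans hu
  have ihψ := ih _ (hn ▸ card_lt_card hψ) (fun u => posPart_nonneg _)
    (fun S hS => hcut S (hS.trans hψ.subset)) rfl
  have hind : ∀ u, (if 0 < φ u then (1:ℝ) else 0) = if u ∈ posSupport φ then 1 else 0 :=
    fun u => by simp
  calc 2 * h * ∑ u, π u * φ u
      = 2 * h * ∑ u, π u * ψ u + 2 * m * (h * ∑ u ∈ posSupport φ, π u) := by
        conv_lhs => enter [2, 2, u]; rw [eq_posPart_sub_add_mul_ite hm.le (hφ0 u) (hmle u)]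
        simp only [mul_add, sum_add_distrib, hind, mul_ite, mul_zero, sum_ite_mem_eq,
          ← sum_mul, ψ]
        ring
    _ ≤ ∑ u, ∑ v, π u * P u v * |ψ u - ψ v| + 2 * m * ergodicFlow π P (posSupport φ) := by
        gcongr
        exact hcut _ subset_rfl hS
    _ = ∑ u, ∑ v, π u * P u v * |φ u - φ v| := by
        rw [mul_comm 2 m, mul_assoc, ← hrev.sum_sum_mul_abs_indicator_sub, mul_sum]
        simp only [mul_sum, ← sum_add_distrib]
        refine sum_congr rfl fun u _ => sum_congr rfl fun v _ => ?_
        rw [abs_sub_eq_abs_posPart_sub_add hm.le (hφ0 u) (hφ0 v) (hmle u) (hmle v), ← hind, ← hind]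
        ring

theorem sq_sum_abs_sq_sub_le (hrev : IsReversible π P) (hP : P ∈ rowStochastic ℝ V)
    (hπ0 : ∀ u, 0 ≤ π u) (g : V → ℝ) :
    (∑ u, ∑ v, π u * P u v * |g u ^ 2 - g v ^ 2|) ^ 2 ≤
      8 * dirichletForm π P g * ∑ u, π u * g u ^ 2 := by
  have hQ : ∀ u v, 0 ≤ π u * P u v := fun u v =>
    mul_nonneg (hπ0 u) (nonneg_of_mem_rowStochastic hP)
  have hcs := sum_sq_le_sum_mul_sum_of_sq_le_mul univ
    (r := fun p : V × V => π p.1 * P p.1 p.2 * |g p.1 ^ 2 - g p.2 ^ 2|)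
    (f := fun p => π p.1 * P p.1 p.2 * (g p.1 - g p.2) ^ 2)
    (g := fun p => π p.1 * P p.1 p.2 * (g p.1 + g p.2) ^ 2)
    (fun p _ => mul_nonneg (hQ _ _) (sq_nonneg _)) (fun p _ => mul_nonneg (hQ _ _) (sq_nonneg _))
    (fun p _ => le_of_eq (by rw [mul_pow, sq_abs]; ring))
  simp only [Fintype.sum_prod_type] at hcs
  have hsum : ∑ u, ∑ v, π u * P u v * (g u + g v) ^ 2 ≤ 4 * ∑ u, π u * g u ^ 2 := by
    have hrow := sum_sum_mul_sq_left (π := π) (sum_row_of_mem_rowStochastic hP) g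
    have hcol := hrev.sum_sum_mul_sq_right (sum_row_of_mem_rowStochastic hP) g
    calc ∑ u, ∑ v, π u * P u v * (g u + g v) ^ 2
        ≤ ∑ u, ∑ v, (2 * (π u * P u v * g u ^ 2) + 2 * (π u * P u v * g v ^ 2)) :=
          sum_le_sum fun u _ => sum_le_sum fun v _ => by
            nlinarith [mul_nonneg (hQ u v) (sq_nonneg (g u - g v))]
      _ = 4 * ∑ u, π u * g u ^ 2 := by
          simp only [sum_add_distrib, ← mul_sum, hrow, hcol]
          ring
  have hE : ∑ u, ∑ v, π u * P u v * (g u - g v) ^ 2 = 2 * dirichletForm π P g := by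
    rw [dirichletForm]; ring
  rw [hE] at hcs
  calc _ ≤ 2 * dirichletForm π P g * ∑ u, ∑ v, π u * P u v * (g u + g v) ^ 2 := hcs
    _ ≤ 2 * dirichletForm π P g * (4 * ∑ u, π u * g u ^ 2) := by
        gcongr
        exact mul_nonneg zero_le_two
          (dirichletForm_nonneg hπ0 (fun _ _ => nonneg_of_mem_rowStochastic hP) g)
    _ = _ := by ring

theorem dirichletForm_posPart_le (hrev : IsReversible π P) (hP : P ∈ rowStochastic ℝ V)
    (hπ0 : ∀ u, 0 ≤ π u) {μ : ℝ} {F : V → ℝ} (hF : P *ᵥ F = μ • F) :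
    dirichletForm π P F⁺ ≤ (1 - μ) * ∑ u, π u * F⁺ u ^ 2 := by
  have hpt : ∀ u, μ * (π u * F⁺ u ^ 2) ≤ π u * F⁺ u * (P *ᵥ F⁺) u := by
    intro u
    rcases le_or_gt (F u) 0 with hu | hu
    · simp [posPart_eq_zero.2 hu]
    have hmono : μ * F u ≤ (P *ᵥ F⁺) u := by
      have hFu := congrFun hF u
      simp only [Pi.smul_apply, smul_eq_mul] at hFu
      rw [← hFu]
      exact sum_le_sum fun v _ =>
        mul_le_mul_of_nonneg_left (le_posPart _) (nonneg_of_mem_rowStochastic hP)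
    rw [Pi.posPart_apply, posPart_eq_self.2 hu.le]
    nlinarith [mul_le_mul_of_nonneg_left hmono (mul_nonneg (hπ0 u) hu.le)]
  rw [hrev.dirichletForm_eq (sum_row_of_mem_rowStochastic hP), sub_mul, one_mul, mul_sum]
  linarith [sum_le_sum fun u (_ : u ∈ univ) => hpt u]

theorem exists_eigenvector_sum_posSupport_le_half (hrev : IsReversible π P)
    (hP1 : ∀ u, ∑ v, P u v = 1) (hπ0 : ∀ u, 0 < π u) (hπ1 : ∑ u, π u = 1) {μ : ℝ}
    (hμ : μ ∈ spectrum ℝ P) (hμ1 : μ ≠ 1) :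
    ∃ F : V → ℝ, P *ᵥ F = μ • F ∧ (posSupport F).Nonempty ∧ ∑ u ∈ posSupport F, π u ≤ 1 / 2 := by
  obtain ⟨f, hf0, hf⟩ := mem_spectrum_iff_exists_mulVec_eq_smul.1 hμ
  have hmean := hrev.sum_mul_eq_zero_of_mulVec_eq_smul hP1 hμ1 hf
  have hpos : ∀ F : V → ℝ, F ≠ 0 → ∑ u, π u * F u = 0 → (posSupport F).Nonempty :=
    fun F hF0 hF => (exists_pos_of_sum_mul_eq_zero hπ0 hF0 hF).imp fun _ => mem_posSupport.2
  have hsplit : ∑ u ∈ posSupport f, π u + ∑ u ∈ posSupport (-f), π u ≤ 1 := by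
    rw [← sum_union (disjoint_left.2 fun u hu hu' => by
      simp only [mem_posSupport, Pi.neg_apply, neg_pos] at hu hu'; linarith), ← hπ1]
    exact sum_le_univ_sum_of_nonneg fun u => (hπ0 u).le
  by_cases hhalf : ∑ u ∈ posSupport f, π u ≤ 1 / 2
  · exact ⟨f, hf, hpos f hf0 hmean, hhalf⟩
  · refine ⟨-f, by rw [mulVec_neg, hf, smul_neg], hpos (-f) (neg_ne_zero.2 hf0) ?_, by linarith⟩
    simp [hmean]

theorem sq_div_two_le_one_sub (hrev : IsReversible π P)
    (hP : P ∈ rowStochastic ℝ V) (hπ0 : ∀ u, 0 < π u) {μ h : ℝ} {F : V → ℝ}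
    (hF : P *ᵥ F = μ • F) (hFpos : (posSupport F).Nonempty) (hh : 0 ≤ h)
    (hcut : ∀ S ⊆ posSupport F, S.Nonempty → h * ∑ u ∈ S, π u ≤ ergodicFlow π P S) :
    h ^ 2 / 2 ≤ 1 - μ := by
  set N := ∑ u, π u * F⁺ u ^ 2
  have hN : 0 < N := by
    obtain ⟨u, hu⟩ := hFpos
    exact sum_pos' (fun v _ => mul_nonneg (hπ0 v).le (sq_nonneg _))
      ⟨u, mem_univ u, mul_pos (hπ0 u) (pow_pos (posPart_pos (mem_posSupport.1 hu)) 2)⟩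
  have hsupp : posSupport (fun u => F⁺ u ^ 2) = posSupport F := by
    ext u
    rw [mem_posSupport, mem_posSupport, Pi.posPart_apply,
      sq_pos_iff, ← posPart_pos_iff, (posPart_nonneg _).lt_iff_ne']
  have hcoarea := hrev.two_mul_sum_le_sum_abs_sub (φ := fun u => F⁺ u ^ 2)
    (fun u => sq_nonneg _) (hsupp ▸ hcut)
  have hcs := hrev.sq_sum_abs_sq_sub_le hP (fun u => (hπ0 u).le) F⁺
  have hE := hrev.dirichletForm_posPart_le hP (fun u => (hπ0 u).le) hF
  have hchain : (2 * h * N) ^ 2 ≤ 8 * ((1 - μ) * N) * N := by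
    calc (2 * h * N) ^ 2 ≤ (∑ u, ∑ v, π u * P u v * |F⁺ u ^ 2 - F⁺ v ^ 2|) ^ 2 :=
          pow_le_pow_left₀ (by positivity) hcoarea 2
      _ ≤ _ := hcs
      _ ≤ _ := by gcongr
  have hsq : N ^ 2 * h ^ 2 ≤ N ^ 2 * (2 * (1 - μ)) := by nlinarith
  linarith [le_of_mul_le_mul_left hsq (by positivity)]

end IsReversible

end MarkovChain

open MarkovChain

/-- Cheeger (Jerrum–Sinclair) inequality: for a reversible irreducible Markov chain
`P` on a finite state space with stationary distribution `π`, second largest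
eigenvalue `λ₁`, and conductance `h = min {Q(S,Sᶜ)/π(S) : ∅ ≠ S, π(S) ≤ 1/2}`
with `Q(u,v) = π(u)P(u,v)`, one has `h²/2 ≤ 1 − λ₁ ≤ 2h`. -/
theorem cheeger_inequality {V : Type*} [Fintype V] [DecidableEq V] [Nonempty V]
    (P : Matrix V V ℝ) (π : V → ℝ)
    (hP0 : ∀ u v, 0 ≤ P u v) (hP1 : ∀ u, ∑ v, P u v = 1)
    (hπ0 : ∀ u, 0 < π u) (hπ1 : ∑ u, π u = 1)
    (hrev : ∀ u v, π u * P u v = π v * P v u)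
    (hirr : ∀ u v, ∃ t : ℕ, 0 < (P ^ t) u v)
    (lam1 : ℝ) (hmem : lam1 ∈ spectrum ℝ P) (hne : lam1 ≠ 1)
    (htop : ∀ μ ∈ spectrum ℝ P, μ ≠ 1 → μ ≤ lam1)
    (h : ℝ)
    (hh : h = sInf {x : ℝ | ∃ S : Finset V, S.Nonempty ∧ (∑ u ∈ S, π u) ≤ 1 / 2 ∧
        x = (∑ u ∈ S, ∑ v ∈ Sᶜ, π u * P u v) / ∑ u ∈ S, π u}) :
    h ^ 2 / 2 ≤ 1 - lam1 ∧ 1 - lam1 ≤ 2 * h := by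
  have hrev : IsReversible π P := hrev
  have hP : P ∈ rowStochastic ℝ V := mem_rowStochastic_iff_sum.2 ⟨hP0, hP1⟩
  have hratio : ∀ x ∈ {x : ℝ | ∃ S : Finset V, S.Nonempty ∧ (∑ u ∈ S, π u) ≤ 1 / 2 ∧
      x = ergodicFlow π P S / ∑ u ∈ S, π u}, 0 ≤ x := by
    rintro _ ⟨S, hS, -, rfl⟩
    exact div_nonneg (ergodicFlow_nonneg (fun u => (hπ0 u).le) hP0 S)
      (sum_pos (fun u _ => hπ0 u) hS).le
  have hh0 : 0 ≤ h := hh ▸ Real.sInf_nonneg hratio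
  have hcut : ∀ S : Finset V, S.Nonempty → ∑ u ∈ S, π u ≤ 1 / 2 →
      h * ∑ u ∈ S, π u ≤ ergodicFlow π P S := fun S hS hS2 =>
    (le_div_iff₀ (sum_pos (fun u _ => hπ0 u) hS)).1
      (hh ▸ csInf_le ⟨0, hratio⟩ ⟨S, hS, hS2, rfl⟩)
  obtain ⟨F, hF, hFpos, hFhalf⟩ :=
    hrev.exists_eigenvector_sum_posSupport_le_half hP1 hπ0 hπ1 hmem hne
  have hlower : h ^ 2 / 2 ≤ 1 - lam1 :=
    hrev.sq_div_two_le_one_sub hP hπ0 hF hFpos hh0 fun S hSF hS =>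
      hcut S hS ((sum_le_sum_of_subset_of_nonneg hSF fun u _ _ => (hπ0 u).le).trans hFhalf)
  have hupper : (1 - lam1) / 2 ≤ h :=
    hh ▸ le_csInf ⟨_, _, hFpos, hFhalf, rfl⟩ fun _ ⟨S, hS, hS2, hx⟩ => hx ▸
      hrev.one_sub_div_two_le_ergodicFlow_div hP hπ0 hπ1 hirr htop (by nlinarith) hS hS2
  exact ⟨hlower, by linarith⟩
end
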